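/- Let $d, d' \in \mathrm{Sym}_n$, and define $d \sim d'$ iff the associated tableaux $\mathrm{T}_d, \mathrm{T}_{d'}$ of type $(\alpha|\beta)$ have equal column multisets $C_j(\mathrm{T}_d) = C_j(\mathrm{T}_{d'})$ for all $j$. Then $d \sim d'$ if and only if $d' \in C_{\t_0}\, d\, \mathrm{Sym}_{\alpha|\beta}$. -/

import Mathlib

/-! At a cell `c`, the colouring `T_d` records the `(α|β)`-block of `d⁻¹ (t0 c)`. Hence
`T_d = T_{d'}` exactly when `d⁻¹ d' ∈ Sym_{α|β}`, and `T_{σ d} = σ · T_d`. Two colourings have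
the same column multisets iff they differ by a column-preserving permutation of the cells, and
these are precisely the conjugates by `t0` of the elements of `C_{t0}`. So `d ∼ d'` iff
`T_{d'} = T_{σ d}` for some `σ ∈ C_{t0}`, i.e. iff `d' ∈ C_{t0} d Sym_{α|β}`. -/

namespace SignedYoung
open Equiv Finset
open scoped Classical

abbrev Sym (n : ℕ) := Equiv.Perm (Fin n)

/-- Index of the block of the composition `γ` containing position `i` (0-based). -/
def blockOf (γ : List ℕ) (i : ℕ) : ℕ :=
  (List.range γ.length).countP (fun j => decide ((γ.take (j + 1)).sum ≤ i))

/-- The Young subgroup of `Sym n` associated to the composition `γ`. -/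
def youngSubgroup (n : ℕ) (γ : List ℕ) : Subgroup (Sym n) where
  carrier := {σ | ∀ i : Fin n, blockOf γ (σ i) = blockOf γ i}
  one_mem' := by intro i; simp
  mul_mem' := by
    intro a b ha hb i
    simp only [Equiv.Perm.mul_apply]
    rw [ha, hb]
  inv_mem' := by
    intro a ha i
    have h := ha (a⁻¹ i)
    rw [show a (a⁻¹ i) = i by simp] at h
    exact h.symm

/-- The subgroup `Sym_α` of the Young subgroup `Sym_{α|β}`: block-preserving permutations
fixing all points `≥ |α|`. -/
def symA (n : ℕ) (α β : List ℕ) : Set (Sym n) :=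
  {σ | σ ∈ youngSubgroup n (α ++ β) ∧ ∀ i : Fin n, α.sum ≤ (i : ℕ) → σ i = i}

/-- The subgroup `Sym_β^{+|α|}`: block-preserving permutations fixing all points `< |α|`. -/
def symB (n : ℕ) (α β : List ℕ) : Set (Sym n) :=
  {σ | σ ∈ youngSubgroup n (α ++ β) ∧ ∀ i : Fin n, (i : ℕ) < α.sum → σ i = i}

/-- Cells of the Young diagram of the composition `lam`. -/
abbrev Cell (lam : List ℕ) := (i : Fin lam.length) × Fin (lam.get i)

/-- A `lam`-tableau: a bijective labelling of the cells by `1, …, n` (here `Fin n`). -/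
abbrev Tab (n : ℕ) (lam : List ℕ) := Cell lam ≃ Fin n

/-- The row stabilizer of a tableau. -/
def rowStab {n : ℕ} {lam : List ℕ} (t : Tab n lam) : Set (Sym n) :=
  {σ | ∀ a : Fin n, (t.symm (σ a)).1 = (t.symm a).1}

/-- The column stabilizer of a tableau. -/
def colStab {n : ℕ} {lam : List ℕ} (t : Tab n lam) : Set (Sym n) :=
  {σ | ∀ a : Fin n, ((t.symm (σ a)).2 : ℕ) = ((t.symm a).2 : ℕ)}

/-- Colours `c_1 < c_2 < ⋯ < d_1 < d_2 < ⋯` (0-based). -/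
abbrev Colour := Lex (ℕ ⊕ ℕ)

def cCol (k : ℕ) : Colour := toLex (Sum.inl k)

def dCol (k : ℕ) : Colour := toLex (Sum.inr k)

/-- `T` is a `lam`-tableau of type `(α|β)`: exactly `α_k` cells of colour `c_k` and
`β_k` of colour `d_k`. -/
def HasType {lam : List ℕ} (α β : List ℕ) (T : Cell lam → Colour) : Prop :=
  (∀ k : ℕ, (Finset.univ.filter fun c => T c = cCol k).card = α.getD k 0) ∧
  (∀ k : ℕ, (Finset.univ.filter fun c => T c = dCol k).card = β.getD k 0)

/-- The colour of the number `i` under the canonical colouring by `(α|β)`. -/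
def colourOfIdx (α β : List ℕ) (i : ℕ) : Colour :=
  if blockOf (α ++ β) i < α.length then cCol (blockOf (α ++ β) i)
  else dCol (blockOf (α ++ β) i - α.length)

/-- The canonical `lam`-tableau of type `(α|β)` associated to the tableau `t0`. -/
def canonT {n : ℕ} {lam : List ℕ} (t0 : Tab n lam) (α β : List ℕ) : Cell lam → Colour :=
  fun c => colourOfIdx α β (t0 c)

/-- The action `σ · T = T ∘ t0⁻¹ ∘ σ⁻¹ ∘ t0` of `Sym n` on tableaux of type `(α|β)`,
through the fixed tableau `t0`. -/
def actT {n : ℕ} {lam : List ℕ} (t0 : Tab n lam) (σ : Sym n) (T : Cell lam → Colour) :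
    Cell lam → Colour :=
  fun c => T (t0.symm (σ⁻¹ (t0 c)))

/-- `T_d = d · T_0`. -/
def TOf {n : ℕ} {lam : List ℕ} (t0 : Tab n lam) (α β : List ℕ) (d : Sym n) :
    Cell lam → Colour :=
  actT t0 d (canonT t0 α β)

def RowSemistd {lam : List ℕ} (T : Cell lam → Colour) : Prop :=
  ∀ c c' : Cell lam, c.1 = c'.1 → (c.2 : ℕ) < (c'.2 : ℕ) → T c ≤ T c'

def ColSemistd {lam : List ℕ} (T : Cell lam → Colour) : Prop :=
  ∀ c c' : Cell lam, (c.2 : ℕ) = (c'.2 : ℕ) → c.1 < c'.1 → T c ≤ T c'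

/-- Repeats in a row occur only for colours `c_k`. -/
def RowRepeatC {lam : List ℕ} (T : Cell lam → Colour) : Prop :=
  ∀ c c' : Cell lam, c.1 = c'.1 → (c.2 : ℕ) ≠ (c'.2 : ℕ) → T c = T c' → ∃ k, T c = cCol k

/-- Repeats in a column occur only for colours `d_k`. -/
def ColRepeatD {lam : List ℕ} (T : Cell lam → Colour) : Prop :=
  ∀ c c' : Cell lam, (c.2 : ℕ) = (c'.2 : ℕ) → c.1 ≠ c'.1 → T c = T c' → ∃ k, T c = dCol k

def IsSemistd {lam : List ℕ} (T : Cell lam → Colour) : Prop :=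
  RowSemistd T ∧ ColSemistd T ∧ RowRepeatC T ∧ ColRepeatD T

/-- A standard tableau: strictly increasing along rows and down columns. -/
def IsStd {n : ℕ} {lam : List ℕ} (t : Tab n lam) : Prop :=
  (∀ c c' : Cell lam, c.1 = c'.1 → (c.2 : ℕ) < (c'.2 : ℕ) → t c < t c') ∧
  (∀ c c' : Cell lam, (c.2 : ℕ) = (c'.2 : ℕ) → c.1 < c'.1 → t c < t c')

def IsPartition (n : ℕ) (lam : List ℕ) : Prop :=
  lam.Pairwise (· ≥ ·) ∧ (∀ x ∈ lam, 0 < x) ∧ lam.sum = n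

def IsBicomp (n : ℕ) (α β : List ℕ) : Prop :=
  (∀ x ∈ α, 0 < x) ∧ (∀ x ∈ β, 0 < x) ∧ α.sum + β.sum = n

/-- `𝒮 = {d : d⁻¹ R_{t0} d ∩ Sym_{α|β} ⊆ Sym_α}`. -/
def RSet {n : ℕ} {lam : List ℕ} (t0 : Tab n lam) (α β : List ℕ) : Set (Sym n) :=
  {d | ∀ σ ∈ rowStab t0, d⁻¹ * σ * d ∈ youngSubgroup n (α ++ β) →
    d⁻¹ * σ * d ∈ symA n α β}

/-- `𝒞 = {d : d⁻¹ C_{t0} d ∩ Sym_{α|β} ⊆ Sym_β^{+|α|}}`. -/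
def CSet {n : ℕ} {lam : List ℕ} (t0 : Tab n lam) (α β : List ℕ) : Set (Sym n) :=
  {d | ∀ σ ∈ colStab t0, d⁻¹ * σ * d ∈ youngSubgroup n (α ++ β) →
    d⁻¹ * σ * d ∈ symB n α β}

/-- The double coset `R_{t0} x Sym_{α|β}`. -/
def dCoset {n : ℕ} {lam : List ℕ} (t0 : Tab n lam) (α β : List ℕ) (x : Sym n) :
    Set (Sym n) :=
  {ω | ∃ τ ∈ rowStab t0, ∃ ξ ∈ youngSubgroup n (α ++ β), ω = τ * x * ξ}

/-- The double coset `C_{t0} x Sym_{α|β}`. -/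
def cCoset {n : ℕ} {lam : List ℕ} (t0 : Tab n lam) (α β : List ℕ) (x : Sym n) :
    Set (Sym n) :=
  {ω | ∃ σ ∈ colStab t0, ∃ ξ ∈ youngSubgroup n (α ++ β), ω = σ * x * ξ}

/-- `ε` is the sign function `ε_𝔡` on the double coset `R_{t0} 𝔡 Sym_{α|β}`:
`ε(τ 𝔡 ξ_α ξ_β^{+|α|}) = sgn ξ_β`. -/
def IsEps {n : ℕ} {lam : List ℕ} (t0 : Tab n lam) (α β : List ℕ) (𝔡 : Sym n)
    (ε : Sym n → ℤ) : Prop :=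
  ∀ τ ∈ rowStab t0, ∀ ξa ∈ symA n α β, ∀ ξb ∈ symB n α β,
    ε (τ * 𝔡 * (ξa * ξb)) = (Equiv.Perm.sign ξb : ℤ)

/-- The coefficient `𝔞_{d,𝔡} = ∑_{σ ∈ C_{t0}, σd ∈ R_{t0} 𝔡 Sym_{α|β}} sgn(σ) ε_𝔡(σ d)`. -/
noncomputable def coeffA {n : ℕ} {lam : List ℕ} (t0 : Tab n lam) (α β : List ℕ)
    (ε : Sym n → ℤ) (d 𝔡 : Sym n) : ℤ :=
  ∑ σ : Sym n, if σ ∈ colStab t0 ∧ σ * d ∈ dCoset t0 α β 𝔡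
    then (Equiv.Perm.sign σ : ℤ) * ε (σ * d) else 0

/-- The multiset of colours in column `j` of `T`. -/
def colMul {lam : List ℕ} (T : Cell lam → Colour) (j : ℕ) : Multiset Colour :=
  (Finset.univ.filter fun c : Cell lam => (c.2 : ℕ) = j).val.map T

noncomputable def sortedCol (m : Multiset Colour) : List Colour := m.sort (· ≤ ·)

/-- Comparison of column multisets: the sorted lists agree up to position `k`, where
the first is larger. -/
def msGT (m m' : Multiset Colour) : Prop :=
  ∃ k, (∀ s, s < k → (sortedCol m).getD s (cCol 0) = (sortedCol m').getD s (cCol 0)) ∧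
    (sortedCol m').getD k (cCol 0) < (sortedCol m).getD k (cCol 0)

/-- The strict column-dominance order `T ⊳ T'`. -/
def TabGT {lam : List ℕ} (T T' : Cell lam → Colour) : Prop :=
  ∃ t, (∀ j, j < t → colMul T j = colMul T' j) ∧ msGT (colMul T t) (colMul T' t)

/-- The column-dominance pre-order `T ⊵ T'`. -/
def TabGE {lam : List ℕ} (T T' : Cell lam → Colour) : Prop :=
  (∀ j, colMul T j = colMul T' j) ∨ TabGT T T'

variable {n : ℕ} {lam : List ℕ}

section Columns

lemma count_colMul (T : Cell lam → Colour) (j : ℕ) (γ : Colour) :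
    (colMul T j).count γ = #{c : Cell lam | ((c.2 : ℕ), T c) = (j, γ)} := by
  simp only [colMul, Multiset.count_map, Prod.mk.injEq, ← Finset.filter_val, Finset.filter_filter,
    Finset.card_val, eq_comm (a := γ)]

lemma colMul_comp_of_forall_col_eq (T : Cell lam → Colour) {e : Equiv.Perm (Cell lam)}
    (he : ∀ c, ((e c).2 : ℕ) = c.2) (j : ℕ) :
    colMul (T ∘ e) j = colMul T j := by
  ext γ
  simp only [count_colMul, Function.comp_apply]
  exact Finset.card_equiv e (by simp [he])

lemma colMul_eq_iff_exists_perm (T T' : Cell lam → Colour) :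
    (∀ j, colMul T j = colMul T' j) ↔
      ∃ e : Equiv.Perm (Cell lam), (∀ c, ((e c).2 : ℕ) = c.2) ∧ T ∘ e = T' := by
  constructor
  · intro h
    let key (T : Cell lam → Colour) (c : Cell lam) : ℕ × Colour := ((c.2 : ℕ), T c)
    have hfib : ∀ p, Fintype.card {c // key T' c = p} = Fintype.card {c // key T c = p} := by
      rintro ⟨j, γ⟩
      simp only [Fintype.card_subtype, key, ← count_colMul, h j]
    let e := Equiv.ofFiberEquiv fun p => Fintype.equivOfCardEq (hfib p)
    have hkey : ∀ c, key T (e c) = key T' c := Equiv.ofFiberEquiv_map _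
    exact ⟨e, fun c => congrArg Prod.fst (hkey c), funext fun c => congrArg Prod.snd (hkey c)⟩
  · rintro ⟨e, he, rfl⟩ j
    exact (colMul_comp_of_forall_col_eq T he j).symm

end Columns

section Action

variable (t0 : Tab n lam)

lemma actT_eq_comp (σ : Sym n) (T : Cell lam → Colour) :
    actT t0 σ T = T ∘ t0.symm.permCongr σ⁻¹ :=
  rfl

lemma mem_colStab_iff_permCongr_inv {σ : Sym n} :
    σ ∈ colStab t0 ↔ ∀ c, ((t0.symm.permCongr σ⁻¹ c).2 : ℕ) = c.2 := by
  -- `simp` cannot simplify inside `(x : Cell lam).2`, whose type depends on `x.1`: rewrite whole cells.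
  refine ⟨fun hσ c => ?_, fun h a => ?_⟩
  · have := hσ (σ⁻¹ (t0 c))
    rw [show t0.symm (σ (σ⁻¹ (t0 c))) = c by simp] at this
    exact this.symm
  · have := h (t0.symm (σ a))
    rw [show t0.symm.permCongr σ⁻¹ (t0.symm (σ a)) = t0.symm a by simp] at this
    exact this.symm

lemma colMul_eq_iff_exists_mem_colStab (T T' : Cell lam → Colour) :
    (∀ j, colMul T j = colMul T' j) ↔ ∃ σ ∈ colStab t0, actT t0 σ T = T' := by
  rw [colMul_eq_iff_exists_perm]
  constructor
  · rintro ⟨e, he, rfl⟩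
    have he' : t0.symm.permCongr (t0.permCongr e)⁻¹⁻¹ = e := by
      rw [inv_inv, ← Equiv.permCongr_symm, Equiv.symm_apply_apply]
    refine ⟨(t0.permCongr e)⁻¹, ?_, ?_⟩
    · rw [mem_colStab_iff_permCongr_inv, he']
      exact he
    · rw [actT_eq_comp, he']
  · rintro ⟨σ, hσ, rfl⟩
    exact ⟨_, (mem_colStab_iff_permCongr_inv t0).1 hσ, (actT_eq_comp t0 σ T).symm⟩

end Action

section Young

variable {α β : List ℕ}

lemma mem_youngSubgroup {γ : List ℕ} {σ : Sym n} :
    σ ∈ youngSubgroup n γ ↔ ∀ i, blockOf γ (σ i) = blockOf γ i :=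
  Iff.rfl

lemma colourOfIdx_eq_iff {i i' : ℕ} :
    colourOfIdx α β i = colourOfIdx α β i' ↔ blockOf (α ++ β) i = blockOf (α ++ β) i' := by
  unfold colourOfIdx
  split_ifs <;> simp [cCol, dCol] <;> omega

variable (t0 : Tab n lam)

lemma TOf_mul (σ d : Sym n) : TOf t0 α β (σ * d) = actT t0 σ (TOf t0 α β d) := by
  funext c
  simp [TOf, actT]

lemma TOf_eq_TOf_iff (d d' : Sym n) :
    TOf t0 α β d = TOf t0 α β d' ↔ d⁻¹ * d' ∈ youngSubgroup n (α ++ β) := by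
  simp only [TOf, actT, canonT, funext_iff, Equiv.apply_symm_apply]
  rw [t0.forall_congr_right (q := fun a => colourOfIdx α β (d⁻¹ a) = colourOfIdx α β (d'⁻¹ a)),
    d'.surjective.forall]
  simp [mem_youngSubgroup, colourOfIdx_eq_iff]

lemma mem_cCoset_iff (d d' : Sym n) :
    d' ∈ cCoset t0 α β d ↔ ∃ σ ∈ colStab t0, (σ * d)⁻¹ * d' ∈ youngSubgroup n (α ++ β) := by
  refine exists_congr fun σ => and_congr_right fun _ => ⟨?_, fun h => ⟨_, h, by group⟩⟩
  rintro ⟨ξ, hξ, rfl⟩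
  simpa [mul_assoc] using hξ

end Young

theorem tab_sim_iff_mem_cCoset_general (n : ℕ) (lam : List ℕ)
    (α β : List ℕ) (t0 : Tab n lam) (d d' : Sym n) :
    (∀ j, colMul (TOf t0 α β d) j = colMul (TOf t0 α β d') j) ↔
      d' ∈ cCoset t0 α β d :=
  calc (∀ j, colMul (TOf t0 α β d) j = colMul (TOf t0 α β d') j)
      ↔ ∃ σ ∈ colStab t0, actT t0 σ (TOf t0 α β d) = TOf t0 α β d' :=
        colMul_eq_iff_exists_mem_colStab t0 _ _
    _ ↔ ∃ σ ∈ colStab t0, (σ * d)⁻¹ * d' ∈ youngSubgroup n (α ++ β) := by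
        simp only [← TOf_mul, TOf_eq_TOf_iff]
    _ ↔ d' ∈ cCoset t0 α β d := (mem_cCoset_iff t0 d d').symm

/-- **Column-equivalence and double cosets (Lemma 4.2(i)).** `d ∼ d'` (i.e. `T_d` and
`T_{d'}` have the same column multisets) if and only if `d' ∈ C_{t0} d Sym_{α|β}`. -/
theorem tab_sim_iff_mem_cCoset (n : ℕ) (lam : List ℕ) (hl : IsPartition n lam)
    (α β : List ℕ) (hab : IsBicomp n α β) (t0 : Tab n lam) (d d' : Sym n) :
    (∀ j, colMul (TOf t0 α β d) j = colMul (TOf t0 α β d') j) ↔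
      d' ∈ cCoset t0 α β d :=
  tab_sim_iff_mem_cCoset_general n lam α β t0 d d'

end SignedYoung
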